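/- Define a path of a Petri net N between markings M and M' as a finite sequence of events e₁, …, eₙ with markings M = M₀ →e₁ M₁ →e₂ ⋯ →eₙ Mₙ = M'. If π is such a path and π' is obtained from π by transposing two adjacent events eᵢ, eᵢ₊₁ that are independent, then π' is also a path from M to M'. Consequently, any permutation of π reachable by repeatedly swapping adjacent independent events is a path from M to M'. -/
import Mathlib


/-- Token-game firing relation of a Petri net. -/
def Fires {B E : Type*} (pre post : E → Set B) (M : Set B) (e : E) (M' : Set B) : Prop :=
  pre e ⊆ M ∧ (M \ pre e) ∩ post e = ∅ ∧ M' = (M \ pre e) ∪ post e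

/-- Independence of events: disjoint neighbourhoods. -/
def Indep {B E : Type*} (pre post : E → Set B) (e₁ e₂ : E) : Prop :=
  (pre e₁ ∪ post e₁) ∩ (pre e₂ ∪ post e₂) = ∅

/-- A path from `M` to `M'`: a finite sequence of events with successive firings. -/
def IsPath {B E : Type*} (pre post : E → Set B) : Set B → List E → Set B → Prop
  | M, [], M' => M = M'
  | M, e :: π, M' => ∃ M₁, Fires pre post M e M₁ ∧ IsPath pre post M₁ π M'

/-- One swap of adjacent independent events. -/
def SwapStep {B E : Type*} (pre post : E → Set B) (π π' : List E) : Prop :=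
  ∃ (π₁ π₂ : List E) (e e' : E), Indep pre post e e' ∧
    π = π₁ ++ e :: e' :: π₂ ∧ π' = π₁ ++ e' :: e :: π₂

lemma swap_fires {B E : Type*} {pre post : E → Set B} {M M₁ M₂ : Set B} {e e' : E}
    (hind : Indep pre post e e') (h1 : Fires pre post M e M₁)
    (h2 : Fires pre post M₁ e' M₂) :
    ∃ N, Fires pre post M e' N ∧ Fires pre post N e M₂ := by
  obtain ⟨hs1, hd1, hm1⟩ := h1
  obtain ⟨hs2, hd2, hm2⟩ := h2
  unfold Indep at hind
  rw [Set.eq_empty_iff_forall_notMem] at hind hd1 hd2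
  replace hind : ∀ x, x ∈ pre e ∪ post e → x ∈ pre e' ∪ post e' → False :=
    fun x h1 h2 => hind x ⟨h1, h2⟩
  simp only [Set.mem_union] at hind
  subst hm1 hm2
  refine ⟨(M \ pre e') ∪ post e', ⟨?_, ?_, rfl⟩, ?_, ?_, ?_⟩
  · intro x hx
    have := hs2 hx
    simp only [Set.mem_union, Set.mem_diff] at this
    rcases this with ⟨hxM, _⟩ | hxp
    · exact hxM
    · exact absurd (hind x (Or.inr hxp)) (by simp [hx])
  · rw [Set.eq_empty_iff_forall_notMem]
    rintro x ⟨⟨hxM, hxn⟩, hxp⟩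
    by_cases hpe : x ∈ pre e
    · exact hind x (Or.inl hpe) (Or.inr hxp)
    · exact hd2 x ⟨⟨Or.inl ⟨hxM, hpe⟩, hxn⟩, hxp⟩
  · intro x hx
    have h1 := hs1 hx
    simp only [Set.mem_union, Set.mem_diff]
    exact Or.inl ⟨h1, fun hc => hind x (Or.inl hx) (Or.inl hc)⟩
  · rw [Set.eq_empty_iff_forall_notMem]
    rintro x ⟨⟨hxN, hxn⟩, hxp⟩
    simp only [Set.mem_union, Set.mem_diff] at hxN
    rcases hxN with ⟨hxM, _⟩ | hxp'
    · exact hd1 x ⟨⟨hxM, hxn⟩, hxp⟩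
    · exact hind x (Or.inr hxp) (Or.inr hxp')
  · ext x
    have := hind x
    simp only [Set.mem_union, Set.mem_diff]
    tauto

lemma isPath_swap {B E : Type*} {pre post : E → Set B} {M M' : Set B}
    (π₁ π₂ : List E) (e e' : E) (hind : Indep pre post e e')
    (h : IsPath pre post M (π₁ ++ e :: e' :: π₂) M') :
    IsPath pre post M (π₁ ++ e' :: e :: π₂) M' := by
  induction π₁ generalizing M with
  | nil =>
    obtain ⟨M₁, hf1, M₂, hf2, hrest⟩ := h
    obtain ⟨N, hN1, hN2⟩ := swap_fires hind hf1 hf2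
    exact ⟨N, hN1, M₂, hN2, hrest⟩
  | cons a t ih =>
    obtain ⟨M₁, hf, hrest⟩ := h
    exact ⟨M₁, hf, ih hrest⟩

theorem path_invariant_under_independent_swaps {B E : Type*}
    (pre post : E → Set B) (M M' : Set B) :
    (∀ (π₁ π₂ : List E) (e e' : E), Indep pre post e e' →
      IsPath pre post M (π₁ ++ e :: e' :: π₂) M' →
      IsPath pre post M (π₁ ++ e' :: e :: π₂) M') ∧
    (∀ π π' : List E, IsPath pre post M π M' →
      Relation.ReflTransGen (SwapStep pre post) π π' →
      IsPath pre post M π' M') := by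
  constructor
  · intro π₁ π₂ e e' hind h
    exact isPath_swap π₁ π₂ e e' hind h
  · intro π π' h hrt
    induction hrt with
    | refl => exact h
    | tail _ hstep ih =>
      obtain ⟨π₁, π₂, e, e', hind, rfl, rfl⟩ := hstep
      exact isPath_swap π₁ π₂ e e' hind ih
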